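/- In ℂ[y₁, y₂, v], the polynomial r₆(y₁,y₂,v) defined by the recursion r_m(y₁,y₂,v) = -y₁⁻¹y₂ t_{m-1} r_{m-3}(y₂,y₁,v) + (1/2)(-2 + y₂² + y₁⁻¹y₂ t_{m-1}(2v - y₁y₂)) r_{m-2}(y₁,y₂,v) + (1/2)(-2y₁⁻¹y₂ t_{m-1} + y₁y₂ t_{m-1} + 2v - y₁y₂) r_{m-1}(y₂,y₁,v), with r₀ = 0, r₁ = 1, r₂ = v, and t₁=1, t₂=-1, t₃=1, t₄=-1, t₅=1, satisfies r₆(y₁,y₂,v) = (v² - v y₁ y₂ + y₁² + y₂² - 3)(v³ - v² y₁ y₂ + v y₁² + v y₂² - v - y₁ y₂). -/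

import Mathlib

/-- `t₁ = 1, t₂ = -1, t₃ = 1, t₄ = -1, t₅ = 1`, i.e. `t_m = (-1)^(m+1)`. -/
def tSign (m : ℕ) : ℤ := (-1) ^ (m + 1)

/-- The Hilden–Lozano–Montesinos recursion `r_m(y₁, y₂, v)`. -/
def hlmR {K : Type*} [Field K] : ℕ → K → K → K → K
  | 0, _, _, _ => 0
  | 1, _, _, _ => 1
  | 2, _, _, v => v
  | (m + 3), y1, y2, v =>
      -(y1⁻¹ * y2 * (tSign (m + 2) : K)) * hlmR m y2 y1 v
      + (1 / 2) * (-2 + y2 ^ 2 + y1⁻¹ * y2 * (tSign (m + 2) : K) * (2 * v - y1 * y2))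
          * hlmR (m + 1) y1 y2 v
      + (1 / 2) * (-2 * y1⁻¹ * y2 * (tSign (m + 2) : K) + y1 * y2 * (tSign (m + 2) : K)
          + 2 * v - y1 * y2) * hlmR (m + 2) y2 y1 v

/-! Once `y₁, y₂ ≠ 0` and `2 ≠ 0`, every `y₁⁻¹` produced by the recursion cancels, so `r₃, r₄, r₅`
are polynomials in `y₁, y₂, v` and `r₆` is obtained from them by one more step of the recursion. -/

section

variable {K : Type*} [Field K] [NeZero (2 : K)] {y1 y2 : K} (v : K)

theorem hlmR_three (h1 : y1 ≠ 0) : hlmR 3 y1 y2 v = v ^ 2 - v * y1 * y2 + y2 ^ 2 - 1 := by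
  rw [hlmR.eq_4]
  simp only [hlmR, tSign]
  field_simp
  ring

theorem hlmR_four (h1 : y1 ≠ 0) (h2 : y2 ≠ 0) :
    hlmR 4 y1 y2 v = v ^ 3 - v ^ 2 * y1 * y2 + v * (y1 ^ 2 + y2 ^ 2 - 2) - y1 * y2 := by
  rw [hlmR.eq_4, hlmR_three v h2]
  simp only [hlmR, tSign]
  field_simp
  ring

theorem hlmR_five (h1 : y1 ≠ 0) (h2 : y2 ≠ 0) :
    hlmR 5 y1 y2 v = v ^ 4 - 2 * v ^ 3 * y1 * y2 + v ^ 2 * (y1 ^ 2 + 2 * y2 ^ 2 + y1 ^ 2 * y2 ^ 2 - 3)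
      - v * y1 * y2 * (y1 ^ 2 + 2 * y2 ^ 2 - 3) + y2 ^ 4 + y1 ^ 2 * y2 ^ 2 - 3 * y2 ^ 2 + 1 := by
  rw [hlmR.eq_4, hlmR_three v h1, hlmR_four v h2 h1]
  simp only [hlmR, tSign]
  field_simp
  ring

theorem hlmR_six (h1 : y1 ≠ 0) (h2 : y2 ≠ 0) :
    hlmR 6 y1 y2 v =
      (v ^ 2 - v * y1 * y2 + y1 ^ 2 + y2 ^ 2 - 3)
        * (v ^ 3 - v ^ 2 * y1 * y2 + v * y1 ^ 2 + v * y2 ^ 2 - v - y1 * y2) := by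
  rw [hlmR.eq_4, hlmR_three v h2, hlmR_four v h1 h2, hlmR_five v h2 h1]
  simp only [tSign]
  field_simp
  ring

end

/-- In the rational function field `ℂ(y₁, y₂, v)` (the fraction field of
`ℂ[y₁, y₂, v]`), the element `r₆(y₁, y₂, v)` equals the stated polynomial. -/
theorem stmt_4 :
    ∀ (y1 y2 v : FractionRing (MvPolynomial (Fin 3) ℂ)),
      y1 = algebraMap (MvPolynomial (Fin 3) ℂ) _ (MvPolynomial.X 0) →
      y2 = algebraMap (MvPolynomial (Fin 3) ℂ) _ (MvPolynomial.X 1) →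
      v = algebraMap (MvPolynomial (Fin 3) ℂ) _ (MvPolynomial.X 2) →
      hlmR 6 y1 y2 v =
        (v ^ 2 - v * y1 * y2 + y1 ^ 2 + y2 ^ 2 - 3)
          * (v ^ 3 - v ^ 2 * y1 * y2 + v * y1 ^ 2 + v * y2 ^ 2 - v - y1 * y2) := by
  rintro y1 y2 v rfl rfl -
  have X_ne_zero (i : Fin 3) :
      algebraMap (MvPolynomial (Fin 3) ℂ) (FractionRing (MvPolynomial (Fin 3) ℂ)) (.X i) ≠ 0 :=
    (map_ne_zero_iff _ (IsFractionRing.injective _ _)).mpr (MvPolynomial.X_ne_zero i)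
  exact hlmR_six _ (X_ne_zero 0) (X_ne_zero 1)
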